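/- Let Û = ∑_{s=0}^{S} U_s with U_s = ∑_{m} b_{s,m} u_{s,m₁}^{(1)} ⊗ u_{s,m₂}^{(2)} ⊗ u_{s,m₃}^{(3)} orthogonal Tucker tensors with cores B_s (i.e. the side matrices of each U_s have orthonormal columns). Let Û^{(ℓ)} be the concatenation of all mode-ℓ side matrices, with singular values σ_{ℓ,1} ≥ σ_{ℓ,2} ≥ …, and let U⁰_(r) be the projection of Û onto the rₗ dominant left singular vectors of Û^{(ℓ)} in each mode ℓ. Then ‖Û − U⁰_(r)‖ ≤ (∑_{s=0}^S ‖B_s‖²)^{1/2} · ∑_{ℓ=1}^{3} (∑_{k=rₗ+1} σ_{ℓ,k}²)^{1/2} in the Frobenius norm. -/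

import Mathlib

/-!
The error telescopes along the modes:
`Û - P₁P₂P₃Û = (I - P₁)Û + P₁(I - P₂)Û + P₁P₂(I - P₃)Û`, and orthogonal projections do not
increase the Frobenius norm, so it suffices to bound each `‖(I - Pₗ)Û‖`. The mode-`ℓ` unfolding
factors as `Û₍ₗ₎ = Û⁽ˡ⁾ G`, where the block of rows of `G` belonging to `s` is the unfolded core
`B_s` times the Kronecker product of the other two side matrices of `U_s`; these have orthonormal
rows, so `‖G‖ = (∑ ‖B_s‖²)^{1/2}`. Finally `(I - Pₗ) Û⁽ˡ⁾ = ∑_{k ≥ rₗ} σₗₖ zₗₖ vₗₖᵀ` has Frobenius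
norm `(∑_{k ≥ rₗ} σₗₖ²)^{1/2}`, and the Frobenius norm is submultiplicative.
-/

open Finset Real Matrix

attribute [local instance] Matrix.frobeniusSeminormedAddCommGroup

theorem Fin.sum_univ_ite_lt {M : Type*} [AddCommMonoid M] {rr R : ℕ} (hrr : rr ≤ R) (f : ℕ → M) :
    ∑ t : Fin R, (if (t : ℕ) < rr then f t else 0) = ∑ t ∈ range rr, f t := by
  rw [Fin.sum_univ_eq_sum_range (fun t => if t < rr then f t else 0), ← sum_filter,
    range_eq_Ico, Ico_filter_lt, min_eq_right hrr, range_eq_Ico]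

theorem Fin.sum_univ_ite_le {M : Type*} [AddCommMonoid M] {R : ℕ} (rr : ℕ) (f : ℕ → M) :
    ∑ t : Fin R, (if rr ≤ (t : ℕ) then f t else 0) = ∑ t ∈ Ico rr R, f t := by
  rw [Fin.sum_univ_eq_sum_range (fun t => if rr ≤ t then f t else 0), ← sum_filter,
    range_eq_Ico, Ico_filter_le, zero_max]

section Frobenius

variable {l m n : Type*}

theorem Matrix.mul_transpose_eq_one_iff [Fintype n] [DecidableEq m] {W : Matrix m n ℝ} :
    W * Wᵀ = 1 ↔ ∀ k k', ∑ i, W k i * W k' i = if k = k' then 1 else 0 := by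
  simp [← Matrix.ext_iff, mul_apply, one_apply]

variable [Fintype l] [Fintype m] [Fintype n]

theorem Matrix.frobenius_norm_eq_sqrt (A : Matrix m n ℝ) : ‖A‖ = √(∑ i, ∑ j, A i j ^ 2) := by
  simp [frobenius_norm_def, Real.sqrt_eq_rpow]

theorem Matrix.frobenius_norm_sq_eq_trace (A : Matrix m n ℝ) : ‖A‖ ^ 2 = trace (Aᵀ * A) := by
  rw [frobenius_norm_eq_sqrt, sq_sqrt (by positivity), Finset.sum_comm]
  simp [trace, mul_apply, sq]

theorem Matrix.frobenius_norm_transpose_mul_of_mul_transpose_eq_one [DecidableEq l]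
    {W : Matrix l m ℝ} (hW : W * Wᵀ = 1) (Y : Matrix l n ℝ) : ‖Wᵀ * Y‖ = ‖Y‖ := by
  rw [← sq_eq_sq₀ (norm_nonneg _) (norm_nonneg _), frobenius_norm_sq_eq_trace,
    frobenius_norm_sq_eq_trace, transpose_mul, transpose_transpose, Matrix.mul_assoc,
    ← Matrix.mul_assoc W, hW, Matrix.one_mul]

theorem Matrix.frobenius_norm_mul_of_mul_transpose_eq_one [DecidableEq m]
    {W : Matrix m n ℝ} (hW : W * Wᵀ = 1) (Y : Matrix l m ℝ) : ‖Y * W‖ = ‖Y‖ := by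
  rw [← frobenius_norm_transpose, transpose_mul,
    frobenius_norm_transpose_mul_of_mul_transpose_eq_one hW, frobenius_norm_transpose]

theorem Matrix.frobenius_norm_transpose_mul_mul [DecidableEq l]
    {Z : Matrix l m ℝ} {V : Matrix l n ℝ} (hZ : Z * Zᵀ = 1) (hV : V * Vᵀ = 1) (M : Matrix l l ℝ) :
    ‖Zᵀ * M * V‖ = ‖M‖ := by
  rw [Matrix.mul_assoc, frobenius_norm_transpose_mul_of_mul_transpose_eq_one hZ,
    frobenius_norm_mul_of_mul_transpose_eq_one hV]

theorem Matrix.frobenius_norm_mul_le_of_transpose_mul_self {P : Matrix m m ℝ}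
    (hP : Pᵀ * P = P) (X : Matrix m n ℝ) : ‖P * X‖ ≤ ‖X‖ := by
  have hPt : Pᵀ = P := by rw [← hP, transpose_mul, transpose_transpose, hP]
  have hPP : P * P = P := by rwa [hPt] at hP
  have hPPX : P * (P * X) = P * X := by rw [← Matrix.mul_assoc, hPP]
  have pythagoras : ‖X‖ ^ 2 = ‖P * X‖ ^ 2 + ‖X - P * X‖ ^ 2 := by
    simp only [frobenius_norm_sq_eq_trace, transpose_sub, transpose_mul, hPt, Matrix.sub_mul,
      Matrix.mul_sub, Matrix.mul_assoc, hPPX, trace_sub]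
    ring
  refine (pow_le_pow_iff_left₀ (norm_nonneg _) (norm_nonneg _) two_ne_zero).mp ?_
  rw [pythagoras]; exact le_add_of_nonneg_right (sq_nonneg _)

end Frobenius

section TruncatedSVD

variable {ι γ β : Type*}

def firstRows (R : ℕ) (z : ℕ → ι → ℝ) : Matrix (Fin R) ι ℝ := of fun t i => z t i

def orthoProj (rr : ℕ) (z : ℕ → ι → ℝ) : Matrix ι ι ℝ :=
  of fun i i' => ∑ t ∈ range rr, z t i * z t i'

theorem orthoProj_eq_transpose_mul_diagonal_mul {rr R : ℕ} (hrr : rr ≤ R) (z : ℕ → ι → ℝ) :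
    orthoProj rr z = (firstRows R z)ᵀ *
      diagonal (fun t : Fin R => if (t : ℕ) < rr then (1 : ℝ) else 0) * firstRows R z := by
  ext i i'
  simp only [orthoProj, firstRows, of_apply, mul_apply, transpose_apply, diagonal_apply,
    mul_ite, mul_zero, Finset.sum_ite_eq', Finset.mem_univ, if_true, mul_one, ite_mul, zero_mul]
  exact (Fin.sum_univ_ite_lt hrr (fun t => z t i * z t i')).symm

variable [Fintype ι] [Fintype γ] [Fintype β]

theorem firstRows_mul_transpose {R : ℕ} {z : ℕ → ι → ℝ}
    (hz : ∀ k < R, ∀ k' < R, ∑ i, z k i * z k' i = if k = k' then 1 else 0) :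
    firstRows R z * (firstRows R z)ᵀ = 1 := by
  refine mul_transpose_eq_one_iff.mpr fun t t' => ?_
  simp [firstRows, hz t t.2 t' t'.2, Fin.val_inj]

theorem orthoProj_transpose_mul_self {rr : ℕ} {z : ℕ → ι → ℝ}
    (hz : ∀ k < rr, ∀ k' < rr, ∑ i, z k i * z k' i = if k = k' then 1 else 0) :
    (orthoProj rr z)ᵀ * orthoProj rr z = orthoProj rr z := by
  have hdiag : diagonal (fun t : Fin rr => if (t : ℕ) < rr then (1 : ℝ) else 0) = 1 := by
    simp
  simp only [orthoProj_eq_transpose_mul_diagonal_mul le_rfl, hdiag, Matrix.mul_one,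
    transpose_mul, transpose_transpose, Matrix.mul_assoc]
  rw [← Matrix.mul_assoc (firstRows rr z), firstRows_mul_transpose hz, Matrix.one_mul]

theorem frobenius_norm_sub_orthoProj_mul_le {rr R : ℕ} (hrr : rr ≤ R) (σ : ℕ → ℝ)
    {z : ℕ → ι → ℝ} {v : ℕ → γ → ℝ}
    (hz : ∀ k < R, ∀ k' < R, ∑ i, z k i * z k' i = if k = k' then 1 else 0)
    (hv : ∀ k < R, ∀ k' < R, ∑ q, v k q * v k' q = if k = k' then 1 else 0)
    {A : Matrix ι γ ℝ} (hA : ∀ i q, A i q = ∑ t ∈ range R, σ t * z t i * v t q)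
    (G : Matrix γ β ℝ) :
    ‖A * G - orthoProj rr z * (A * G)‖ ≤ √(∑ t ∈ Ico rr R, σ t ^ 2) * ‖G‖ := by
  have hZ := firstRows_mul_transpose hz
  have hA' : A = (firstRows R z)ᵀ * diagonal (fun t : Fin R => σ t) * firstRows R v := by
    ext i q
    simp only [hA, firstRows, mul_apply, transpose_apply, of_apply, diagonal_apply, mul_ite,
      mul_zero, Finset.sum_ite_eq', Finset.mem_univ, if_true]
    rw [← Fin.sum_univ_eq_sum_range (fun t => σ t * z t i * v t q)]
    exact Finset.sum_congr rfl fun t _ => by ring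
  have hres : A - orthoProj rr z * A = (firstRows R z)ᵀ *
      diagonal (fun t : Fin R => if rr ≤ (t : ℕ) then σ t else 0) * firstRows R v := by
    rw [orthoProj_eq_transpose_mul_diagonal_mul hrr, hA']
    simp only [Matrix.mul_assoc]
    rw [← Matrix.mul_assoc (firstRows R z), hZ, Matrix.one_mul, ← Matrix.mul_assoc (diagonal _),
      diagonal_mul_diagonal, ← Matrix.mul_sub, ← Matrix.sub_mul, diagonal_sub]
    congr 3
    ext t
    by_cases h : rr ≤ (t : ℕ)
    · simp [h, not_lt.mpr h]
    · simp [h, not_le.mp h]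
  have htail : ‖diagonal (fun t : Fin R => if rr ≤ (t : ℕ) then σ t else 0)‖ =
      √(∑ t ∈ Ico rr R, σ t ^ 2) := by
    rw [frobenius_norm_diagonal, EuclideanSpace.norm_eq, ← Fin.sum_univ_ite_le]
    congr 1
    refine Finset.sum_congr rfl fun t _ => ?_
    by_cases h : rr ≤ (t : ℕ) <;> simp [h]
  calc ‖A * G - orthoProj rr z * (A * G)‖ = ‖(A - orthoProj rr z * A) * G‖ := by
        rw [Matrix.sub_mul, Matrix.mul_assoc]
    _ ≤ ‖A - orthoProj rr z * A‖ * ‖G‖ := frobenius_norm_mul _ _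
    _ = √(∑ t ∈ Ico rr R, σ t ^ 2) * ‖G‖ := by
        rw [hres, frobenius_norm_transpose_mul_mul (firstRows_mul_transpose hz)
          (firstRows_mul_transpose hv), htail]

end TruncatedSVD

section Tensor

variable {ι₁ ι₂ ι₃ κ : Type*}

def unfold : (ι₁ → ι₂ → ι₃ → ℝ) →ₗ[ℝ] Matrix ι₁ (ι₂ × ι₃) ℝ where
  toFun T := of fun i p => T i p.1 p.2
  map_add' _ _ := rfl
  map_smul' _ _ := rfl

@[simp]
theorem unfold_apply (T : ι₁ → ι₂ → ι₃ → ℝ) (i : ι₁) (p : ι₂ × ι₃) :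
    unfold T i p = T i p.1 p.2 :=
  rfl

noncomputable def frobNorm [Fintype ι₁] [Fintype ι₂] [Fintype ι₃] (T : ι₁ → ι₂ → ι₃ → ℝ) : ℝ :=
  √(∑ i, ∑ j, ∑ k, T i j k ^ 2)

def modeMul₁ [Fintype ι₁] (A : Matrix κ ι₁ ℝ) (T : ι₁ → ι₂ → ι₃ → ℝ) : κ → ι₂ → ι₃ → ℝ :=
  fun i j k => ∑ i', A i i' * T i' j k

def modeMul₂ [Fintype ι₂] (A : Matrix κ ι₂ ℝ) (T : ι₁ → ι₂ → ι₃ → ℝ) : ι₁ → κ → ι₃ → ℝ :=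
  fun i j k => ∑ j', A j j' * T i j' k

def modeMul₃ [Fintype ι₃] (A : Matrix κ ι₃ ℝ) (T : ι₁ → ι₂ → ι₃ → ℝ) : ι₁ → ι₂ → κ → ℝ :=
  fun i j k => ∑ k', A k k' * T i j k'

theorem unfold_modeMul₁ [Fintype ι₁] (A : Matrix κ ι₁ ℝ) (T : ι₁ → ι₂ → ι₃ → ℝ) :
    unfold (modeMul₁ A T) = A * unfold T := by
  ext i p
  simp [modeMul₁, mul_apply]

theorem modeMul₁_sub [Fintype ι₁] (A : Matrix κ ι₁ ℝ) (T T' : ι₁ → ι₂ → ι₃ → ℝ) :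
    modeMul₁ A (T - T') = modeMul₁ A T - modeMul₁ A T' := by
  ext i j k
  simp [modeMul₁, mul_sub, sum_sub_distrib]

theorem modeMul₂_sub [Fintype ι₂] (A : Matrix κ ι₂ ℝ) (T T' : ι₁ → ι₂ → ι₃ → ℝ) :
    modeMul₂ A (T - T') = modeMul₂ A T - modeMul₂ A T' := by
  ext i j k
  simp [modeMul₂, mul_sub, sum_sub_distrib]

variable [Fintype ι₁] [Fintype ι₂] [Fintype ι₃]

theorem frobNorm_eq_norm_unfold (T : ι₁ → ι₂ → ι₃ → ℝ) : frobNorm T = ‖unfold T‖ := by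
  simp [frobNorm, frobenius_norm_eq_sqrt, Fintype.sum_prod_type]

theorem frobNorm_add_le (T T' : ι₁ → ι₂ → ι₃ → ℝ) :
    frobNorm (T + T') ≤ frobNorm T + frobNorm T' := by
  simpa only [frobNorm_eq_norm_unfold, map_add] using norm_add_le _ _

theorem frobNorm_swap (T : ι₁ → ι₂ → ι₃ → ℝ) : frobNorm (fun j i k => T i j k) = frobNorm T := by
  rw [frobNorm, frobNorm, Finset.sum_comm]

theorem frobNorm_rotate (T : ι₁ → ι₂ → ι₃ → ℝ) : frobNorm (fun k i j => T i j k) = frobNorm T := by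
  rw [frobNorm, frobNorm, Finset.sum_comm]
  simp_rw [Finset.sum_comm (γ := ι₃)]

theorem frobNorm_modeMul₁_le {P : Matrix ι₁ ι₁ ℝ} (hP : Pᵀ * P = P) (T : ι₁ → ι₂ → ι₃ → ℝ) :
    frobNorm (modeMul₁ P T) ≤ frobNorm T := by
  simpa only [frobNorm_eq_norm_unfold, unfold_modeMul₁] using
    frobenius_norm_mul_le_of_transpose_mul_self hP _

theorem frobNorm_modeMul₂_le {P : Matrix ι₂ ι₂ ℝ} (hP : Pᵀ * P = P) (T : ι₁ → ι₂ → ι₃ → ℝ) :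
    frobNorm (modeMul₂ P T) ≤ frobNorm T := by
  rw [← frobNorm_swap, ← frobNorm_swap T]
  exact frobNorm_modeMul₁_le hP _

theorem frobNorm_sub_modeMul_modeMul_modeMul_le {P₁ : Matrix ι₁ ι₁ ℝ} {P₂ : Matrix ι₂ ι₂ ℝ}
    (hP₁ : P₁ᵀ * P₁ = P₁) (hP₂ : P₂ᵀ * P₂ = P₂) (P₃ : Matrix ι₃ ι₃ ℝ) (T : ι₁ → ι₂ → ι₃ → ℝ) :
    frobNorm (T - modeMul₁ P₁ (modeMul₂ P₂ (modeMul₃ P₃ T))) ≤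
      frobNorm (T - modeMul₁ P₁ T) + frobNorm (T - modeMul₂ P₂ T) +
        frobNorm (T - modeMul₃ P₃ T) := by
  have telescope : T - modeMul₁ P₁ (modeMul₂ P₂ (modeMul₃ P₃ T)) = (T - modeMul₁ P₁ T) +
      modeMul₁ P₁ (T - modeMul₂ P₂ T) + modeMul₁ P₁ (modeMul₂ P₂ (T - modeMul₃ P₃ T)) := by
    rw [modeMul₂_sub, modeMul₁_sub, modeMul₁_sub]
    abel
  rw [telescope]
  refine (frobNorm_add_le _ _).trans (add_le_add ((frobNorm_add_le _ _).trans
    (add_le_add le_rfl (frobNorm_modeMul₁_le hP₁ _))) ?_)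
  exact (frobNorm_modeMul₁_le hP₁ _).trans (frobNorm_modeMul₂_le hP₂ _)

end Tensor

section Tucker

variable {ι₁ ι₂ ι₃ α β γ : Type*} [Fintype α] [Fintype β] [Fintype γ]

def tucker (B : α → β → γ → ℝ) (a : Matrix α ι₁ ℝ) (b : Matrix β ι₂ ℝ) (c : Matrix γ ι₃ ℝ) :
    ι₁ → ι₂ → ι₃ → ℝ :=
  fun i j k => ∑ m₁, ∑ m₂, ∑ m₃, B m₁ m₂ m₃ * a m₁ i * b m₂ j * c m₃ k

theorem unfold_tucker (B : α → β → γ → ℝ) (a : Matrix α ι₁ ℝ) (b : Matrix β ι₂ ℝ)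
    (c : Matrix γ ι₃ ℝ) : unfold (tucker B a b c) = aᵀ * unfold B * kroneckerMap (· * ·) b c := by
  rw [Matrix.mul_assoc]
  ext i p
  simp only [unfold_apply, tucker, mul_apply, transpose_apply, kroneckerMap_apply,
    Fintype.sum_prod_type, Finset.mul_sum]
  exact sum_congr rfl fun _ _ => sum_congr rfl fun _ _ => sum_congr rfl fun _ _ => by ring

theorem tucker_swap (B : α → β → γ → ℝ) (a : Matrix α ι₁ ℝ) (b : Matrix β ι₂ ℝ)
    (c : Matrix γ ι₃ ℝ) :
    (fun j i k => tucker B a b c i j k) = tucker (fun m₂ m₁ m₃ => B m₁ m₂ m₃) b a c := by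
  ext j i k
  simp only [tucker]
  rw [Finset.sum_comm]
  exact sum_congr rfl fun _ _ => sum_congr rfl fun _ _ => sum_congr rfl fun _ _ => by ring

theorem tucker_rotate (B : α → β → γ → ℝ) (a : Matrix α ι₁ ℝ) (b : Matrix β ι₂ ℝ)
    (c : Matrix γ ι₃ ℝ) :
    (fun k i j => tucker B a b c i j k) = tucker (fun m₃ m₁ m₂ => B m₁ m₂ m₃) c a b := by
  ext k i j
  simp only [tucker]
  conv_rhs => rw [Finset.sum_comm]
  refine sum_congr rfl fun _ _ => ?_
  rw [Finset.sum_comm]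
  exact sum_congr rfl fun _ _ => sum_congr rfl fun _ _ => by ring

end Tucker

section Concatenation

variable {S ι κ : Type*} {α : S → Type*}

def catRows (A : ∀ s, Matrix (α s) ι ℝ) : Matrix (Σ s, α s) ι ℝ := of fun q i => A q.1 q.2 i

variable [Fintype S] [∀ s, Fintype (α s)]

theorem transpose_catRows_mul_catRows (A : ∀ s, Matrix (α s) ι ℝ) (C : ∀ s, Matrix (α s) κ ℝ) :
    (catRows A)ᵀ * catRows C = ∑ s, (A s)ᵀ * C s := by
  ext i k
  simp [catRows, mul_apply, Matrix.sum_apply, Fintype.sum_sigma]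

theorem frobenius_norm_catRows [Fintype ι] (A : ∀ s, Matrix (α s) ι ℝ) :
    ‖catRows A‖ = √(∑ s, ‖A s‖ ^ 2) := by
  simp only [frobenius_norm_eq_sqrt]
  rw [Fintype.sum_sigma]
  congr 1
  exact sum_congr rfl fun s _ => (sq_sqrt (by positivity)).symm

end Concatenation

section TuckerSum

variable {S ι₁ ι₂ ι₃ : Type*} [Fintype S]
  {α β γ : S → Type*} [∀ s, Fintype (α s)] [∀ s, Fintype (β s)] [∀ s, Fintype (γ s)]

theorem unfold_sum_tucker (B : ∀ s, α s → β s → γ s → ℝ) (a : ∀ s, Matrix (α s) ι₁ ℝ)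
    (b : ∀ s, Matrix (β s) ι₂ ℝ) (c : ∀ s, Matrix (γ s) ι₃ ℝ) :
    unfold (∑ s, tucker (B s) (a s) (b s) (c s)) =
      (catRows a)ᵀ * catRows fun s => unfold (B s) * kroneckerMap (· * ·) (b s) (c s) := by
  simp only [map_sum, unfold_tucker, transpose_catRows_mul_catRows, Matrix.mul_assoc]

variable [Fintype ι₁] [Fintype ι₂] [Fintype ι₃]

theorem frobNorm_sub_modeMul₁_orthoProj_le [∀ s, DecidableEq (β s)] [∀ s, DecidableEq (γ s)]
    (B : ∀ s, α s → β s → γ s → ℝ) (a : ∀ s, Matrix (α s) ι₁ ℝ)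
    {b : ∀ s, Matrix (β s) ι₂ ℝ} {c : ∀ s, Matrix (γ s) ι₃ ℝ}
    (hb : ∀ s, b s * (b s)ᵀ = 1) (hc : ∀ s, c s * (c s)ᵀ = 1)
    {rr R : ℕ} (hrr : rr ≤ R) (σ : ℕ → ℝ) {z : ℕ → ι₁ → ℝ} {v : ℕ → (Σ s, α s) → ℝ}
    (hz : ∀ k < R, ∀ k' < R, ∑ i, z k i * z k' i = if k = k' then 1 else 0)
    (hv : ∀ k < R, ∀ k' < R, ∑ q, v k q * v k' q = if k = k' then 1 else 0)
    (hsvd : ∀ s m i, a s m i = ∑ t ∈ range R, σ t * z t i * v t ⟨s, m⟩)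
    {T : ι₁ → ι₂ → ι₃ → ℝ} (hT : T = ∑ s, tucker (B s) (a s) (b s) (c s)) :
    frobNorm (T - modeMul₁ (orthoProj rr z) T) ≤
      √(∑ s, frobNorm (B s) ^ 2) * √(∑ t ∈ Ico rr R, σ t ^ 2) := by
  have hbc : ∀ s, kroneckerMap (· * ·) (b s) (c s) * (kroneckerMap (· * ·) (b s) (c s))ᵀ = 1 :=
    fun s => by rw [← kroneckerMap_transpose, ← mul_kronecker_mul, hb, hc, one_kronecker_one]
  rw [frobNorm_eq_norm_unfold, map_sub, unfold_modeMul₁, hT, unfold_sum_tucker, mul_comm]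
  refine (frobenius_norm_sub_orthoProj_mul_le hrr σ hz hv (fun i q => hsvd q.1 q.2 i) _).trans_eq ?_
  simp only [frobenius_norm_catRows, frobenius_norm_mul_of_mul_transpose_eq_one (hbc _),
    frobNorm_eq_norm_unfold]

theorem frobNorm_sub_modeMul₂_orthoProj_le [∀ s, DecidableEq (α s)] [∀ s, DecidableEq (γ s)]
    (B : ∀ s, α s → β s → γ s → ℝ) {a : ∀ s, Matrix (α s) ι₁ ℝ}
    (b : ∀ s, Matrix (β s) ι₂ ℝ) {c : ∀ s, Matrix (γ s) ι₃ ℝ}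
    (ha : ∀ s, a s * (a s)ᵀ = 1) (hc : ∀ s, c s * (c s)ᵀ = 1)
    {rr R : ℕ} (hrr : rr ≤ R) (σ : ℕ → ℝ) {z : ℕ → ι₂ → ℝ} {v : ℕ → (Σ s, β s) → ℝ}
    (hz : ∀ k < R, ∀ k' < R, ∑ i, z k i * z k' i = if k = k' then 1 else 0)
    (hv : ∀ k < R, ∀ k' < R, ∑ q, v k q * v k' q = if k = k' then 1 else 0)
    (hsvd : ∀ s m j, b s m j = ∑ t ∈ range R, σ t * z t j * v t ⟨s, m⟩)
    {T : ι₁ → ι₂ → ι₃ → ℝ} (hT : T = ∑ s, tucker (B s) (a s) (b s) (c s)) :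
    frobNorm (T - modeMul₂ (orthoProj rr z) T) ≤
      √(∑ s, frobNorm (B s) ^ 2) * √(∑ t ∈ Ico rr R, σ t ^ 2) := by
  have hT' : (fun j i k => T i j k) =
      ∑ s, tucker (fun m₂ m₁ m₃ => B s m₁ m₂ m₃) (b s) (a s) (c s) := by
    ext j i k
    simp [hT, Finset.sum_apply, ← tucker_swap]
  have := frobNorm_sub_modeMul₁_orthoProj_le _ b ha hc hrr σ hz hv hsvd hT'
  simp only [frobNorm_swap] at this
  exact (frobNorm_swap _).symm.trans_le this

theorem frobNorm_sub_modeMul₃_orthoProj_le [∀ s, DecidableEq (α s)] [∀ s, DecidableEq (β s)]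
    (B : ∀ s, α s → β s → γ s → ℝ) {a : ∀ s, Matrix (α s) ι₁ ℝ}
    {b : ∀ s, Matrix (β s) ι₂ ℝ} (c : ∀ s, Matrix (γ s) ι₃ ℝ)
    (ha : ∀ s, a s * (a s)ᵀ = 1) (hb : ∀ s, b s * (b s)ᵀ = 1)
    {rr R : ℕ} (hrr : rr ≤ R) (σ : ℕ → ℝ) {z : ℕ → ι₃ → ℝ} {v : ℕ → (Σ s, γ s) → ℝ}
    (hz : ∀ k < R, ∀ k' < R, ∑ i, z k i * z k' i = if k = k' then 1 else 0)
    (hv : ∀ k < R, ∀ k' < R, ∑ q, v k q * v k' q = if k = k' then 1 else 0)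
    (hsvd : ∀ s m k, c s m k = ∑ t ∈ range R, σ t * z t k * v t ⟨s, m⟩)
    {T : ι₁ → ι₂ → ι₃ → ℝ} (hT : T = ∑ s, tucker (B s) (a s) (b s) (c s)) :
    frobNorm (T - modeMul₃ (orthoProj rr z) T) ≤
      √(∑ s, frobNorm (B s) ^ 2) * √(∑ t ∈ Ico rr R, σ t ^ 2) := by
  have hT' : (fun k i j => T i j k) =
      ∑ s, tucker (fun m₃ m₁ m₂ => B s m₁ m₂ m₃) (c s) (a s) (b s) := by
    ext k i j
    simp [hT, Finset.sum_apply, ← tucker_rotate]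
  have := frobNorm_sub_modeMul₁_orthoProj_le _ c ha hb hrr σ hz hv hsvd hT'
  simp only [frobNorm_rotate] at this
  exact (frobNorm_rotate _).symm.trans_le this

end TuckerSum

theorem tucker_sum_to_tucker_error_bound_general (n S : ℕ)
    (r : Fin (S + 1) → Fin 3 → ℕ) (rr : Fin 3 → ℕ)
    (u : (s : Fin (S + 1)) → (ℓ : Fin 3) → Fin (r s ℓ) → Fin n → ℝ)
    (B : (s : Fin (S + 1)) → Fin (r s 0) → Fin (r s 1) → Fin (r s 2) → ℝ)
    (hu : ∀ s ℓ m m', ∑ i, u s ℓ m i * u s ℓ m' i = if m = m' then 1 else 0)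
    (U : Fin (S + 1) → Fin n → Fin n → Fin n → ℝ)
    (hU : ∀ s i j k, U s i j k =
      ∑ m1, ∑ m2, ∑ m3, B s m1 m2 m3 * u s 0 m1 i * u s 1 m2 j * u s 2 m3 k)
    (Uhat : Fin n → Fin n → Fin n → ℝ)
    (hUhat : ∀ i j k, Uhat i j k = ∑ s, U s i j k)
    (Rtot : Fin 3 → ℕ)
    (σ : Fin 3 → ℕ → ℝ) (z : Fin 3 → ℕ → Fin n → ℝ)
    (v : (ℓ : Fin 3) → ℕ → (Σ s : Fin (S + 1), Fin (r s ℓ)) → ℝ)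
    (hz : ∀ ℓ, ∀ k < Rtot ℓ, ∀ k' < Rtot ℓ,
      ∑ i, z ℓ k i * z ℓ k' i = if k = k' then 1 else 0)
    (hv : ∀ ℓ, ∀ k < Rtot ℓ, ∀ k' < Rtot ℓ,
      ∑ c : (Σ s : Fin (S + 1), Fin (r s ℓ)), v ℓ k c * v ℓ k' c = if k = k' then 1 else 0)
    (hsvd : ∀ ℓ s m i, u s ℓ m i =
      ∑ t ∈ Finset.range (Rtot ℓ), σ ℓ t * z ℓ t i * v ℓ t ⟨s, m⟩)
    (hrr : ∀ ℓ, rr ℓ ≤ Rtot ℓ)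
    (P : Fin 3 → Fin n → Fin n → ℝ)
    (hP : ∀ ℓ i i', P ℓ i i' = ∑ t ∈ Finset.range (rr ℓ), z ℓ t i * z ℓ t i')
    (U0 : Fin n → Fin n → Fin n → ℝ)
    (hU0 : ∀ i j k, U0 i j k =
      ∑ i', ∑ j', ∑ k', P 0 i i' * P 1 j j' * P 2 k k' * Uhat i' j' k') :
    Real.sqrt (∑ i, ∑ j, ∑ k, (Uhat i j k - U0 i j k) ^ 2) ≤
      Real.sqrt (∑ s, ∑ m1, ∑ m2, ∑ m3, (B s m1 m2 m3) ^ 2) *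
        ∑ ℓ : Fin 3, Real.sqrt (∑ k ∈ Finset.Ico (rr ℓ) (Rtot ℓ), (σ ℓ k) ^ 2) := by
  have hside : ∀ s ℓ, of (u s ℓ) * (of (u s ℓ))ᵀ = 1 :=
    fun s ℓ => mul_transpose_eq_one_iff.mpr (hu s ℓ)
  have hT : Uhat = ∑ s, tucker (B s) (of (u s 0)) (of (u s 1)) (of (u s 2)) := by
    ext i j k
    simp [hUhat, hU, tucker, Finset.sum_apply]
  obtain rfl : P = fun ℓ => orthoProj (rr ℓ) (z ℓ) := by
    ext ℓ i i'
    simp [hP, orthoProj]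
  have hproj : ∀ ℓ, (orthoProj (rr ℓ) (z ℓ))ᵀ * orthoProj (rr ℓ) (z ℓ) = orthoProj (rr ℓ) (z ℓ) :=
    fun ℓ => orthoProj_transpose_mul_self fun k hk k' hk' =>
      hz ℓ k (hk.trans_le (hrr ℓ)) k' (hk'.trans_le (hrr ℓ))
  obtain rfl : U0 = modeMul₁ (orthoProj (rr 0) (z 0))
      (modeMul₂ (orthoProj (rr 1) (z 1)) (modeMul₃ (orthoProj (rr 2) (z 2)) Uhat)) := by
    ext i j k
    simp [hU0, modeMul₁, modeMul₂, modeMul₃, mul_sum, mul_assoc]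
  have hcore : ∑ s, ∑ m1, ∑ m2, ∑ m3, B s m1 m2 m3 ^ 2 = ∑ s, frobNorm (B s) ^ 2 :=
    sum_congr rfl fun s _ => (sq_sqrt (by positivity)).symm
  calc √(∑ i, ∑ j, ∑ k, (Uhat i j k - _) ^ 2)
      ≤ _ := frobNorm_sub_modeMul_modeMul_modeMul_le (hproj 0) (hproj 1) _ Uhat
    _ ≤ _ := add_le_add_three
        (frobNorm_sub_modeMul₁_orthoProj_le B _ (fun s => hside s 1) (fun s => hside s 2)
          (hrr 0) (σ 0) (hz 0) (hv 0) (hsvd 0) hT)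
        (frobNorm_sub_modeMul₂_orthoProj_le B _ (fun s => hside s 0) (fun s => hside s 2)
          (hrr 1) (σ 1) (hz 1) (hv 1) (hsvd 1) hT)
        (frobNorm_sub_modeMul₃_orthoProj_le B _ (fun s => hside s 0) (fun s => hside s 1)
          (hrr 2) (σ 2) (hz 2) (hv 2) (hsvd 2) hT)
    _ = _ := by rw [hcore, Fin.sum_univ_three]; ring

theorem tucker_sum_to_tucker_error_bound (n S : ℕ)
    (r : Fin (S + 1) → Fin 3 → ℕ) (rr : Fin 3 → ℕ)
    (u : (s : Fin (S + 1)) → (ℓ : Fin 3) → Fin (r s ℓ) → Fin n → ℝ)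
    (B : (s : Fin (S + 1)) → Fin (r s 0) → Fin (r s 1) → Fin (r s 2) → ℝ)
    (hu : ∀ s ℓ m m', ∑ i, u s ℓ m i * u s ℓ m' i = if m = m' then 1 else 0)
    (U : Fin (S + 1) → Fin n → Fin n → Fin n → ℝ)
    (hU : ∀ s i j k, U s i j k =
      ∑ m1, ∑ m2, ∑ m3, B s m1 m2 m3 * u s 0 m1 i * u s 1 m2 j * u s 2 m3 k)
    (Uhat : Fin n → Fin n → Fin n → ℝ)
    (hUhat : ∀ i j k, Uhat i j k = ∑ s, U s i j k)
    (Rtot : Fin 3 → ℕ) (hRtot : ∀ ℓ, Rtot ℓ = min n (∑ s, r s ℓ))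
    (σ : Fin 3 → ℕ → ℝ) (z : Fin 3 → ℕ → Fin n → ℝ)
    (v : (ℓ : Fin 3) → ℕ → (Σ s : Fin (S + 1), Fin (r s ℓ)) → ℝ)
    (hσnn : ∀ ℓ k, 0 ≤ σ ℓ k)
    (hσdec : ∀ ℓ k k', k ≤ k' → σ ℓ k' ≤ σ ℓ k)
    (hz : ∀ ℓ, ∀ k < Rtot ℓ, ∀ k' < Rtot ℓ,
      ∑ i, z ℓ k i * z ℓ k' i = if k = k' then 1 else 0)
    (hv : ∀ ℓ, ∀ k < Rtot ℓ, ∀ k' < Rtot ℓ,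
      ∑ c : (Σ s : Fin (S + 1), Fin (r s ℓ)), v ℓ k c * v ℓ k' c = if k = k' then 1 else 0)
    (hsvd : ∀ ℓ s m i, u s ℓ m i =
      ∑ t ∈ Finset.range (Rtot ℓ), σ ℓ t * z ℓ t i * v ℓ t ⟨s, m⟩)
    (hrr : ∀ ℓ, rr ℓ ≤ Rtot ℓ)
    (P : Fin 3 → Fin n → Fin n → ℝ)
    (hP : ∀ ℓ i i', P ℓ i i' = ∑ t ∈ Finset.range (rr ℓ), z ℓ t i * z ℓ t i')
    (U0 : Fin n → Fin n → Fin n → ℝ)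
    (hU0 : ∀ i j k, U0 i j k =
      ∑ i', ∑ j', ∑ k', P 0 i i' * P 1 j j' * P 2 k k' * Uhat i' j' k') :
    Real.sqrt (∑ i, ∑ j, ∑ k, (Uhat i j k - U0 i j k) ^ 2) ≤
      Real.sqrt (∑ s, ∑ m1, ∑ m2, ∑ m3, (B s m1 m2 m3) ^ 2) *
        ∑ ℓ : Fin 3, Real.sqrt (∑ k ∈ Finset.Ico (rr ℓ) (Rtot ℓ), (σ ℓ k) ^ 2) :=
  tucker_sum_to_tucker_error_bound_general n S r rr u B hu U hU Uhat hUhat Rtot σ z v hz hv hsvd hrr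
    P hP U0 hU0
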